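/- Let k ∈ ℕ and let D, D₁, D₂ be digraphs and U, W be vertex sets. Then: (i) for any v ∈ V(D₁ ∪ D₂), if (v,U) is k-connected in D₁ and (u,W) is k-connected in D₂ for every u ∈ U, then (v,W) is k-connected in D₁ ∪ D₂; (ii) for any v ∈ V(D₁ ∪ D₂), if (U,v) is k-connected in D₁ and (W,u) is k-connected in D₂ for every u ∈ U, then (W,v) is k-connected in D₁ ∪ D₂; (iii) if D[W] is a strongly k-connected digraph and both (u,W) and (W,u) are k-connected in D[U ∪ W] for every u ∈ U, then D[U ∪ W] is a strongly k-connected digraph. -/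

import Mathlib

/-- A digraph on the vertex type `V`, given by its adjacency (directed edge) relation. -/
structure Digr (V : Type) where
  Adj : V → V → Prop

namespace Digr

variable {V : Type}

/-- No loops. -/
def Loopless (G : Digr V) : Prop := ∀ v, ¬ G.Adj v v

/-- A tournament: every pair of distinct vertices is joined by exactly one directed edge. -/
def IsTournament (G : Digr V) : Prop :=
  G.Loopless ∧ ∀ u v : V, u ≠ v → (G.Adj u v ↔ ¬ G.Adj v u)

/-- A semicomplete digraph: every pair of distinct vertices is joined by at least one
directed edge (edges in both directions are allowed). -/
def IsSemicomplete (G : Digr V) : Prop :=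
  G.Loopless ∧ ∀ u v : V, u ≠ v → (G.Adj u v ∨ G.Adj v u)

/-- Out-neighbourhood `N⁺_G(v)`. -/
def outN (G : Digr V) (v : V) : Set V := {u | G.Adj v u}

/-- In-neighbourhood `N⁻_G(v)`. -/
def inN (G : Digr V) (v : V) : Set V := {u | G.Adj u v}

/-- Union of two digraphs (on the same vertex type). -/
def union (G H : Digr V) : Digr V := ⟨fun a b => G.Adj a b ∨ H.Adj a b⟩

/-- `l` is a directed path of `G` lying inside the vertex set `A`, from `u` to `v`. -/
def IsPathOn (G : Digr V) (A : Set V) (u v : V) (l : List V) : Prop :=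
  l.Nodup ∧ l.Chain' G.Adj ∧ (∀ x ∈ l, x ∈ A) ∧ l.head? = some u ∧ l.getLast? = some v

/-- There is a directed path of `G` inside `A` from `u` to `v`. -/
def Reaches (G : Digr V) (A : Set V) (u v : V) : Prop :=
  ∃ l, G.IsPathOn A u v l

/-- The induced subdigraph of `G` on `W` is strongly `k`-connected: `|W| ≥ k + 1` and for
every ordered pair of distinct vertices of `W` and every `S ⊆ W ∖ {u,v}` with `|S| ≤ k - 1`
there is a directed path from `u` to `v` avoiding `S`. -/
def StronglyConnOn (G : Digr V) (W : Set V) (k : ℕ) : Prop :=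
  k + 1 ≤ W.ncard ∧
  ∀ u ∈ W, ∀ v ∈ W, u ≠ v → ∀ S : Set V, S ⊆ W \ {u, v} → S.ncard < k →
    G.Reaches (W \ S) u v

/-- Strong `c`-connectedness for a real parameter `c` (the condition on the removed set `S`
is `|S| ≤ c - 1`). -/
def StronglyConnOnR (G : Digr V) (W : Set V) (c : ℝ) : Prop :=
  c + 1 ≤ (W.ncard : ℝ) ∧
  ∀ u ∈ W, ∀ v ∈ W, u ≠ v → ∀ S : Set V, S ⊆ W \ {u, v} → (S.ncard : ℝ) ≤ c - 1 →
    G.Reaches (W \ S) u v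

/-- `l` is a directed cycle of `G` (length at least 3) whose vertex set is `C`. -/
def IsCycleOn (G : Digr V) (C : Set V) (l : List V) : Prop :=
  3 ≤ l.length ∧ l.Nodup ∧ (∀ x, x ∈ l ↔ x ∈ C) ∧ l.Chain' G.Adj ∧
  ∃ a b, l.getLast? = some a ∧ l.head? = some b ∧ G.Adj a b

/-- The pair `(v, U)` is `k`-connected in the induced subdigraph of `G` on `A`: after
deleting any `S ⊆ A ∖ {v}` with `|S| ≤ k - 1` there is a path from `v` to some vertex
of `U ∖ S` inside `A ∖ S`. -/
def VtxSetConn (G : Digr V) (A : Set V) (v : V) (U : Set V) (k : ℕ) : Prop :=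
  ∀ S : Set V, S ⊆ A \ {v} → S.ncard < k → ∃ u ∈ U \ S, G.Reaches (A \ S) v u

/-- The pair `(U, v)` is `k`-connected in the induced subdigraph of `G` on `A`. -/
def SetVtxConn (G : Digr V) (A : Set V) (U : Set V) (v : V) (k : ℕ) : Prop :=
  ∀ S : Set V, S ⊆ A \ {v} → S.ncard < k → ∃ u ∈ U \ S, G.Reaches (A \ S) u v

end Digr

open Digr

/-!
Paths inside a vertex set can be shortcut to simple paths, so reachability avoiding a fixed
separator `S` is transitive. For (i) and (ii), a separator `S` of size `< k` misses some
`u ∈ U` reachable from `v` (resp. reaching `v`), and `S` is then also admissible for the pair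
of `u` and `W`. For (iii), a path from `u` to `v` avoiding `S` runs from `u` into `W ∖ S`,
through `D[W] - (S ∩ W)`, and from `W ∖ S` to `v`.
-/

namespace Digr

variable {V : Type} {G G' : Digr V} {A A' : Set V}

theorem Reaches.refl {u : V} (hu : u ∈ A) : G.Reaches A u u :=
  ⟨[u], List.nodup_singleton u, List.isChain_singleton u, by simpa using hu, rfl, rfl⟩

theorem Reaches.mem_left {u v : V} (h : G.Reaches A u v) : u ∈ A := by
  obtain ⟨l, -, -, hA, hu, -⟩ := h
  exact hA u (List.mem_of_head? hu)

/-- If `a` already lies on the path, cut the path at `a` instead of prepending it. -/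
theorem Reaches.cons {a b v : V} (hab : G.Adj a b) (ha : a ∈ A) (h : G.Reaches A b v) :
    G.Reaches A a v := by
  obtain ⟨l, hnd, hch, hA, hb, hv⟩ := h
  by_cases hal : a ∈ l
  · obtain ⟨s, t, rfl⟩ := List.append_of_mem hal
    refine ⟨a :: t, hnd.sublist (List.sublist_append_right s _), hch.suffix ⟨s, rfl⟩,
      fun x hx => hA x (List.mem_append_right s hx), rfl, ?_⟩
    rwa [List.getLast?_append_of_ne_nil _ (List.cons_ne_nil a t)] at hv
  · obtain ⟨t, rfl⟩ : ∃ t, l = b :: t := List.head?_eq_some_iff.1 hb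
    refine ⟨a :: b :: t, List.nodup_cons.2 ⟨hal, hnd⟩, hch.cons_cons hab, ?_, rfl, ?_⟩
    · exact fun x hx => (List.mem_cons.1 hx).elim (· ▸ ha) (hA x)
    · rwa [List.getLast?_cons_cons]

theorem reaches_iff_reflTransGen {u v : V} :
    G.Reaches A u v ↔ u ∈ A ∧ Relation.ReflTransGen (fun a b => G.Adj a b ∧ b ∈ A) u v := by
  constructor
  · intro h
    refine ⟨h.mem_left, ?_⟩
    obtain ⟨l, -, hch, hA, hu, hv⟩ := h
    obtain ⟨t, rfl⟩ := List.head?_eq_some_iff.1 hu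
    refine List.relationReflTransGen_of_exists_isChain_cons t
      (hch.imp_of_mem_imp fun a b _ hb hab => ⟨hab, hA b hb⟩) ?_
    rw [List.getLast?_eq_some_getLast (List.cons_ne_nil u t)] at hv
    exact Option.some.inj hv
  · rintro ⟨hu, h⟩
    induction h using Relation.ReflTransGen.head_induction_on with
    | refl => exact Reaches.refl hu
    | head hab _ ih => exact (ih hab.2).cons hab.1 hu

theorem Reaches.trans {u v w : V} (huv : G.Reaches A u v) (hvw : G.Reaches A v w) :
    G.Reaches A u w := by
  rw [reaches_iff_reflTransGen] at *
  exact ⟨huv.1, huv.2.trans hvw.2⟩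

theorem Reaches.mono (hG : ∀ a b, G.Adj a b → G'.Adj a b) (hA : A ⊆ A') {u v : V}
    (h : G.Reaches A u v) : G'.Reaches A' u v := by
  obtain ⟨l, hnd, hch, hmem, hu, hv⟩ := h
  exact ⟨l, hnd, hch.imp hG, fun x hx => hA (hmem x hx), hu, hv⟩

variable {U W : Set V} {k : ℕ}

theorem VtxSetConn.mono (hG : ∀ a b, G.Adj a b → G'.Adj a b) {v : V}
    (h : G.VtxSetConn A v U k) : G'.VtxSetConn A v U k := fun S hS hk =>
  let ⟨u, hu, hvu⟩ := h S hS hk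
  ⟨u, hu, hvu.mono hG subset_rfl⟩

theorem SetVtxConn.mono (hG : ∀ a b, G.Adj a b → G'.Adj a b) {v : V}
    (h : G.SetVtxConn A U v k) : G'.SetVtxConn A U v k := fun S hS hk =>
  let ⟨u, hu, huv⟩ := h S hS hk
  ⟨u, hu, huv.mono hG subset_rfl⟩

theorem vtxSetConn_of_mem {v : V} (hvA : v ∈ A) (hvU : v ∈ U) : G.VtxSetConn A v U k :=
  fun _ hS _ => have hvS := fun h => (hS h).2 rfl; ⟨v, ⟨hvU, hvS⟩, .refl ⟨hvA, hvS⟩⟩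

theorem setVtxConn_of_mem {v : V} (hvA : v ∈ A) (hvU : v ∈ U) : G.SetVtxConn A U v k :=
  fun _ hS _ => have hvS := fun h => (hS h).2 rfl; ⟨v, ⟨hvU, hvS⟩, .refl ⟨hvA, hvS⟩⟩

theorem VtxSetConn.trans {v : V} (hv : G.VtxSetConn A v U k)
    (hU : ∀ u ∈ U, G.VtxSetConn A u W k) : G.VtxSetConn A v W k := by
  intro S hS hk
  obtain ⟨u, ⟨huU, huS⟩, hvu⟩ := hv S hS hk
  obtain ⟨w, hw, huw⟩ := hU u huU S (fun x hx => ⟨(hS hx).1, fun h => huS (h ▸ hx)⟩) hk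
  exact ⟨w, hw, hvu.trans huw⟩

theorem SetVtxConn.trans {v : V} (hv : G.SetVtxConn A U v k)
    (hU : ∀ u ∈ U, G.SetVtxConn A W u k) : G.SetVtxConn A W v k := by
  intro S hS hk
  obtain ⟨u, ⟨huU, huS⟩, huv⟩ := hv S hS hk
  obtain ⟨w, hw, hwu⟩ := hU u huU S (fun x hx => ⟨(hS hx).1, fun h => huS (h ▸ hx)⟩) hk
  exact ⟨w, hw, hwu.trans huv⟩

theorem StronglyConnOn.reaches_diff [Finite V] {S : Set V} {u v : V}
    (hW : G.StronglyConnOn W k) (hWA : W ⊆ A) (hu : u ∈ W \ S) (hv : v ∈ W \ S)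
    (hk : S.ncard < k) : G.Reaches (A \ S) u v := by
  obtain rfl | huv := eq_or_ne u v
  · exact .refl ⟨hWA hu.1, hu.2⟩
  have hSW : S ∩ W ⊆ W \ {u, v} := by
    rintro x ⟨hxS, hxW⟩
    refine ⟨hxW, ?_⟩
    rintro (rfl | rfl)
    exacts [hu.2 hxS, hv.2 hxS]
  refine (hW.2 u hu.1 v hv.1 huv (S ∩ W) hSW
    ((Set.ncard_inter_le_ncard_left S W).trans_lt hk)).mono (fun _ _ h => h) ?_
  rintro x ⟨hxW, hxSW⟩
  exact ⟨hWA hxW, fun hxS => hxSW ⟨hxS, hxW⟩⟩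

theorem StronglyConnOn.union [Finite V] (hW : G.StronglyConnOn W k)
    (hU : ∀ u ∈ U, G.VtxSetConn (U ∪ W) u W k ∧ G.SetVtxConn (U ∪ W) W u k) :
    G.StronglyConnOn (U ∪ W) k := by
  refine ⟨hW.1.trans (Set.ncard_le_ncard Set.subset_union_right), ?_⟩
  intro u hu v hv _ S hS hk
  have hout : G.VtxSetConn (U ∪ W) u W k :=
    hu.elim (fun huU => (hU u huU).1) (vtxSetConn_of_mem hu)
  have hin : G.SetVtxConn (U ∪ W) W v k :=
    hv.elim (fun hvU => (hU v hvU).2) (setVtxConn_of_mem hv)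
  obtain ⟨w₁, hw₁, huw₁⟩ :=
    hout S (hS.trans (Set.sdiff_subset_sdiff_right (by simp))) hk
  obtain ⟨w₂, hw₂, hw₂v⟩ :=
    hin S (hS.trans (Set.sdiff_subset_sdiff_right (by simp))) hk
  exact (huw₁.trans (hW.reaches_diff Set.subset_union_right hw₁ hw₂ hk)).trans hw₂v

end Digr

/-- **Lemma 2.3** (gluing lemma). (i) and (ii): composing `k`-connected pairs across a
union of digraphs; (iii): if `D[W]` is strongly `k`-connected and every `u ∈ U` is
`k`-connected to and from `W` in `D[U ∪ W]`, then `D[U ∪ W]` is strongly `k`-connected. -/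
theorem stmt6 {V : Type} [Fintype V] (k : ℕ) (D D₁ D₂ : Digr V) (U W : Set V) :
    (∀ v : V, D₁.VtxSetConn Set.univ v U k →
      (∀ u ∈ U, D₂.VtxSetConn Set.univ u W k) →
      (D₁.union D₂).VtxSetConn Set.univ v W k) ∧
    (∀ v : V, D₁.SetVtxConn Set.univ U v k →
      (∀ u ∈ U, D₂.SetVtxConn Set.univ W u k) →
      (D₁.union D₂).SetVtxConn Set.univ W v k) ∧
    (D.StronglyConnOn W k →
      (∀ u ∈ U, D.VtxSetConn (U ∪ W) u W k ∧ D.SetVtxConn (U ∪ W) W u k) →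
      D.StronglyConnOn (U ∪ W) k) := by
  have hleft : ∀ a b, D₁.Adj a b → (D₁.union D₂).Adj a b := fun _ _ => Or.inl
  have hright : ∀ a b, D₂.Adj a b → (D₁.union D₂).Adj a b := fun _ _ => Or.inr
  refine ⟨fun v h₁ h₂ => ?_, fun v h₁ h₂ => ?_, fun hW hU => hW.union hU⟩
  · exact (h₁.mono hleft).trans fun u hu => (h₂ u hu).mono hright
  · exact (h₁.mono hleft).trans fun u hu => (h₂ u hu).mono hright
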